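/- Let A₀, A₁, …, A_l be real n×n matrices, q ∈ [0,1], and p₁, …, p_l ≥ 0 with Σⱼ pⱼ = 1. Consider the random switched linear system X_{k+1} = A₀ X_k with probability q and X_{k+1} = A_{θ_k} X_k with probability (1−q)pⱼ for θ_k = j, where the switching indices are i.i.d. and independent of the initial state X₀, which is square-integrable. If there exists a real symmetric positive-definite matrix Q with A₀ᵀQA₀ − Q negative definite and Σⱼ pⱼ·AⱼᵀQAⱼ − Q negative definite, then the system is mean-square stable: E[‖X_k‖²] → 0 as k → ∞. -/

import Mathlib

/-!
The two LMIs say that the averaged one-step form `S = q A₀ᵀQA₀ + (1 - q) Σⱼ pⱼ AⱼᵀQAⱼ`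
satisfies `xᵀSx < xᵀQx` for `x ≠ 0`; by compactness of the unit sphere, `S ≤ ρ Q` for some
`ρ < 1`. The switching index `ι k` is independent of `X k`, which is a function of `X 0` and the
earlier indices, so `E[X_{k+1}ᵀ Q X_{k+1}] = E[X_kᵀ S X_k] ≤ ρ E[X_kᵀ Q X_k]`. Hence the
Lyapunov expectations decay geometrically, and `‖x‖²` is dominated by a multiple of `xᵀQx`.
-/

open Matrix MeasureTheory ProbabilityTheory

section Homogeneous

variable {E : Type*} [NormedAddCommGroup E] [NormedSpace ℝ E] [FiniteDimensional ℝ E]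
  {f g : E → ℝ}

theorem exists_pos_le_mul_of_homogeneous (hf : Continuous f) (hg : Continuous g)
    (hf₂ : ∀ (c : ℝ) x, f (c • x) = c ^ 2 * f x) (hg₂ : ∀ (c : ℝ) x, g (c • x) = c ^ 2 * g x)
    (hg_pos : ∀ x, x ≠ 0 → 0 < g x) : ∃ C, 0 < C ∧ ∀ x, f x ≤ C * g x := by
  have hg_pos' : ∀ u ∈ Metric.sphere (0 : E) 1, 0 < g u := fun u hu =>
    hg_pos u (ne_zero_of_mem_unit_sphere ⟨u, hu⟩)
  obtain ⟨C, hC⟩ := (isCompact_sphere (0 : E) 1).bddAbove_image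
    (hf.continuousOn.div hg.continuousOn fun u hu => (hg_pos' u hu).ne')
  refine ⟨max C 1, by positivity, fun x => ?_⟩
  rcases eq_or_ne x 0 with rfl | hx
  · simp [by simpa using hf₂ 0 0, by simpa using hg₂ 0 0]
  set u := ‖x‖⁻¹ • x
  have hu : u ∈ Metric.sphere (0 : E) 1 := by simp [u, norm_smul, hx]
  have hxu : x = ‖x‖ • u := by simp [u, smul_smul, hx]
  have hfu : f u ≤ max C 1 * g u := by
    rw [← div_le_iff₀ (hg_pos' u hu)]
    exact (hC ⟨u, hu, rfl⟩).trans (le_max_left _ _)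
  rw [hxu, hf₂, hg₂]
  nlinarith [sq_nonneg ‖x‖]

theorem exists_lt_one_le_mul_of_homogeneous (hf : Continuous f) (hg : Continuous g)
    (hf₂ : ∀ (c : ℝ) x, f (c • x) = c ^ 2 * f x) (hg₂ : ∀ (c : ℝ) x, g (c • x) = c ^ 2 * g x)
    (hg_pos : ∀ x, x ≠ 0 → 0 < g x) (hfg : ∀ x, x ≠ 0 → f x < g x) :
    ∃ ρ, 0 ≤ ρ ∧ ρ < 1 ∧ ∀ x, f x ≤ ρ * g x := by
  obtain ⟨C, hC, hgC⟩ := exists_pos_le_mul_of_homogeneous hg (hg.sub hf) hg₂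
    (fun c x => by simp only [Pi.sub_apply, hf₂, hg₂]; ring) fun x hx => sub_pos.2 (hfg x hx)
  have hg_nonneg : ∀ x, 0 ≤ g x := fun x => by
    rcases eq_or_ne x 0 with rfl | hx
    · simp [by simpa using hg₂ 0 0]
    · exact (hg_pos x hx).le
  refine ⟨max 0 (1 - C⁻¹), le_max_left _ _, max_lt one_pos (by simpa using hC), fun x => ?_⟩
  have hfx : f x ≤ (1 - C⁻¹) * g x := by
    have : C⁻¹ * g x ≤ g x - f x := (inv_mul_le_iff₀ hC).2 (hgC x)
    linarith
  exact hfx.trans (mul_le_mul_of_nonneg_right (le_max_right _ _) (hg_nonneg x))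

end Homogeneous

namespace Matrix

variable {m : Type*} [Fintype m]

theorem dotProduct_mulVec_smul_self (B : Matrix m m ℝ) (c : ℝ) (x : m → ℝ) :
    (c • x) ⬝ᵥ B *ᵥ (c • x) = c ^ 2 * (x ⬝ᵥ B *ᵥ x) := by
  rw [mulVec_smul, dotProduct_smul, smul_dotProduct, smul_eq_mul, smul_eq_mul]
  ring

theorem dotProduct_transpose_mul_mul_mulVec_self (M Q : Matrix m m ℝ) (x : m → ℝ) :
    x ⬝ᵥ (Mᵀ * Q * M) *ᵥ x = (M *ᵥ x) ⬝ᵥ Q *ᵥ (M *ᵥ x) := by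
  rw [← mulVec_mulVec, ← mulVec_mulVec, dotProduct_mulVec, vecMul_transpose]

theorem dotProduct_sum_smul_mulVec {ι : Type*} (s : Finset ι) (c : ι → ℝ)
    (B : ι → Matrix m m ℝ) (x : m → ℝ) :
    x ⬝ᵥ (∑ v ∈ s, c v • B v) *ᵥ x = ∑ v ∈ s, c v * (x ⬝ᵥ B v *ᵥ x) := by
  simp only [sum_mulVec, dotProduct_sum, smul_mulVec, dotProduct_smul, smul_eq_mul]

theorem exists_norm_mulVec_le {V : Type*} [Fintype V] (M : V → Matrix m m ℝ) :
    ∃ C, ∀ v x, ‖M v *ᵥ x‖ ≤ C * ‖x‖ := by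
  set L : V → (m → ℝ) →L[ℝ] (m → ℝ) := fun v => LinearMap.toContinuousLinearMap (M v).mulVecLin
  refine ⟨∑ v, ‖L v‖, fun v x => ?_⟩
  calc ‖M v *ᵥ x‖ = ‖L v x‖ := rfl
    _ ≤ ‖L v‖ * ‖x‖ := (L v).le_opNorm x
    _ ≤ (∑ v, ‖L v‖) * ‖x‖ := by
        gcongr
        exact Finset.single_le_sum (fun w _ => norm_nonneg (L w)) (Finset.mem_univ v)

end Matrix

theorem MeasureTheory.MemLp.integrable_dotProduct_mulVec {Ω m : Type*} [Fintype m]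
    {mΩ : MeasurableSpace Ω} {μ : Measure Ω} {Y : Ω → m → ℝ} (hY : MemLp Y 2 μ)
    (B : Matrix m m ℝ) : Integrable (fun ω => Y ω ⬝ᵥ B *ᵥ Y ω) μ := by
  have hBY : MemLp (fun ω => B *ᵥ Y ω) 2 μ :=
    (LinearMap.toContinuousLinearMap B.mulVecLin).comp_memLp' hY
  exact integrable_finsetSum _ fun i _ => (hY.eval i).integrable_mul (hBY.eval i)

namespace ProbabilityTheory

variable {Ω : Type*} {mΩ : MeasurableSpace Ω} {μ : Measure Ω}

theorem Indep.sup_right_of_indep_sup_left [IsZeroOrProbabilityMeasure μ]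
    {m₁ m₂ m₃ : MeasurableSpace Ω} (h₁ : m₁ ≤ mΩ) (h₂ : m₂ ≤ mΩ) (h₃ : m₃ ≤ mΩ)
    (h₁₂ : Indep m₁ m₂ μ) (h₁₂₃ : Indep (m₁ ⊔ m₂) m₃ μ) : Indep m₁ (m₂ ⊔ m₃) μ := by
  set p : Set (Set Ω) := Set.image2 (· ∩ ·) {s | MeasurableSet[m₂] s} {s | MeasurableSet[m₃] s}
  have hp : IsPiSystem p := by
    rintro _ ⟨s₁, hs₁, t₁, ht₁, rfl⟩ _ ⟨s₂, hs₂, t₂, ht₂, rfl⟩ -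
    exact ⟨s₁ ∩ s₂, hs₁.inter hs₂, t₁ ∩ t₂, ht₁.inter ht₂, Set.inter_inter_inter_comm _ _ _ _⟩
  have hgen : m₂ ⊔ m₃ = MeasurableSpace.generateFrom p := by
    refine le_antisymm (sup_le (fun s hs => ?_) fun t ht => ?_)
      (MeasurableSpace.generateFrom_le ?_)
    · exact MeasurableSpace.measurableSet_generateFrom ⟨s, hs, Set.univ, .univ, Set.inter_univ s⟩
    · exact MeasurableSpace.measurableSet_generateFrom ⟨Set.univ, .univ, t, ht, Set.univ_inter t⟩
    · rintro _ ⟨s, hs, t, ht, rfl⟩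
      exact (le_sup_left (b := m₃) s hs).inter (le_sup_right (a := m₂) t ht)
  refine IndepSets.indep h₁ (sup_le h₂ h₃) (@MeasurableSpace.isPiSystem_measurableSet Ω m₁) hp
    (@MeasurableSpace.generateFrom_measurableSet Ω m₁).symm hgen ?_
  rw [IndepSets_iff]
  rintro a _ ha ⟨s, hs, t, ht, rfl⟩
  rw [Indep_iff] at h₁₂ h₁₂₃
  have has : MeasurableSet[m₁ ⊔ m₂] (a ∩ s) :=
    (le_sup_left (b := m₂) a ha).inter (le_sup_right (a := m₁) s hs)
  rw [← Set.inter_assoc, h₁₂₃ _ _ has ht, h₁₂ _ _ ha hs,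
    h₁₂₃ _ _ (le_sup_right (a := m₁) s hs) ht, mul_assoc]

theorem IndepFun.integral_comp_eq_sum {V E : Type*} [Fintype V] [MeasurableSpace V]
    [MeasurableSingletonClass V] [MeasurableSpace E] {T : Ω → V} {Y : Ω → E}
    (hTY : IndepFun T Y μ) (hT : Measurable T) (hY : Measurable Y) {g : V → E → ℝ}
    (hg : ∀ v, Measurable (g v)) (hint : ∀ v, Integrable (fun ω => g v (Y ω)) μ) :
    ∫ ω, g (T ω) (Y ω) ∂μ = ∑ v, μ.real (T ⁻¹' {v}) * ∫ ω, g v (Y ω) ∂μ := by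
  have hfib : ∀ v, MeasurableSet (T ⁻¹' {v}) := fun v => hT (measurableSet_singleton v)
  calc ∫ ω, g (T ω) (Y ω) ∂μ = ∫ ω in ⋃ v, T ⁻¹' {v}, g (T ω) (Y ω) ∂μ := by
        rw [← Set.preimage_iUnion, Set.iUnion_of_singleton, Set.preimage_univ, setIntegral_univ]
    _ = ∑ v, ∫ ω in T ⁻¹' {v}, g v (Y ω) ∂μ := by
        rw [integral_iUnion_fintype hfib (pairwise_disjoint_fiber T) fun v => ?_]
        · refine Finset.sum_congr rfl fun v _ => setIntegral_congr_fun (hfib v) fun ω hω => ?_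
          rw [show T ω = v from hω]
        · refine (hint v).integrableOn.congr_fun (fun ω hω => ?_) (hfib v)
          rw [show T ω = v from hω]
    _ = ∑ v, μ.real (T ⁻¹' {v}) * ∫ ω, g v (Y ω) ∂μ := by
        refine Finset.sum_congr rfl fun v _ => ?_
        exact ((IndepFun_iff_Indep _ _ _).1 hTY).setIntegral_eq_mul hT.comap_le hY.aemeasurable
          ⟨{v}, measurableSet_singleton v, rfl⟩ (hg v).aestronglyMeasurable

end ProbabilityTheory

namespace SwitchedSystem

variable {Ω V E : Type*} {mΩ : MeasurableSpace Ω} [MeasurableSpace V] [MeasurableSpace E]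

/-- The information available before the `k`-th switch: `X k` is measurable with respect to it,
while `ι k` is independent of it. -/
abbrev history (ι : ℕ → Ω → V) (X₀ : Ω → E) (k : ℕ) : MeasurableSpace Ω :=
  (⨆ j ∈ Set.Iio k, MeasurableSpace.comap (ι j) inferInstance) ⊔
    MeasurableSpace.comap X₀ inferInstance

variable {ι : ℕ → Ω → V} {X₀ : Ω → E}

theorem history_le (hι : ∀ k, Measurable (ι k)) (hX₀ : Measurable X₀) (k : ℕ) :
    history ι X₀ k ≤ mΩ :=
  sup_le (iSup₂_le fun j _ => (hι j).comap_le) hX₀.comap_le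

theorem history_mono : Monotone (history ι X₀) := fun _ _ hkl =>
  sup_le_sup_right (biSup_mono fun _ hj => lt_of_lt_of_le hj hkl) _

theorem measurable_history_succ (k : ℕ) : Measurable[history ι X₀ (k + 1)] (ι k) :=
  Measurable.of_comap_le <| le_sup_of_le_left <|
    le_iSup₂ (f := fun j (_ : j ∈ Set.Iio (k + 1)) => MeasurableSpace.comap (ι j) inferInstance)
      k (Nat.lt_succ_self k)

theorem indep_history {μ : Measure Ω} [IsZeroOrProbabilityMeasure μ]
    (hι : ∀ k, Measurable (ι k)) (hX₀ : Measurable X₀) (hιind : iIndepFun ι μ)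
    (hX₀ind : IndepFun (fun ω k => ι k ω) X₀ μ) (k : ℕ) :
    Indep (MeasurableSpace.comap (ι k) inferInstance) (history ι X₀ k) μ := by
  have hle : ∀ j, MeasurableSpace.comap (ι j) inferInstance ≤
      MeasurableSpace.comap (fun ω k => ι k ω) MeasurableSpace.pi := fun j =>
    ((measurable_pi_apply j).comp (comap_measurable (fun ω k => ι k ω))).comap_le
  refine Indep.sup_right_of_indep_sup_left (hι k).comap_le
    (iSup₂_le fun j _ => (hι j).comap_le) hX₀.comap_le ?_ ?_
  · simpa using indep_iSup_of_disjoint (fun j => (hι j).comap_le)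
      ((iIndepFun_iff_iIndep _ _ _).1 hιind) (S := {k}) (T := Set.Iio k)
      (Set.disjoint_singleton_left.2 (lt_irrefl k))
  · exact indep_of_indep_of_le_left ((IndepFun_iff_Indep _ _ _).1 hX₀ind)
      (sup_le (hle k) (iSup₂_le fun j _ => hle j))

theorem measurable_history [Fintype V] [MeasurableSingletonClass V] {m : Type*} [Fintype m]
    {M : V → Matrix m m ℝ} {X : ℕ → Ω → m → ℝ} (hrec : ∀ k ω, X (k + 1) ω = M (ι k ω) *ᵥ X k ω)
    (k : ℕ) : Measurable[history ι (X 0) k] (X k) := by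
  induction k with
  | zero => exact Measurable.of_comap_le le_sup_right
  | succ k ih =>
    have hF : Measurable fun p : (m → ℝ) × V => M p.2 *ᵥ p.1 :=
      measurable_from_prod_countable_left fun v =>
        (M v).mulVecLin.continuous_of_finiteDimensional.measurable
    rw [show X (k + 1) = fun ω => M (ι k ω) *ᵥ X k ω from funext (hrec k)]
    exact hF.comp ((ih.mono (history_mono k.le_succ) le_rfl).prodMk (measurable_history_succ k))

end SwitchedSystem

structure IsIndepSwitchedSystem {Ω V m : Type*} [MeasurableSpace Ω] [MeasurableSpace V]
    [Fintype m] (μ : Measure Ω) (M : V → Matrix m m ℝ) (ι : ℕ → Ω → V) (X : ℕ → Ω → m → ℝ) :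
    Prop where
  measurable_switching : ∀ k, Measurable (ι k)
  measurable_init : Measurable (X 0)
  iIndepFun_switching : iIndepFun ι μ
  indepFun_init : IndepFun (fun ω k => ι k ω) (X 0) μ
  step : ∀ k ω, X (k + 1) ω = M (ι k ω) *ᵥ X k ω

namespace IsIndepSwitchedSystem

open SwitchedSystem

variable {Ω V m : Type*} {mΩ : MeasurableSpace Ω} {μ : Measure Ω} [Fintype V] [MeasurableSpace V]
  [MeasurableSingletonClass V] [Fintype m] {M : V → Matrix m m ℝ} {ι : ℕ → Ω → V}
  {X : ℕ → Ω → m → ℝ}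

theorem measurable (h : IsIndepSwitchedSystem μ M ι X) (k : ℕ) : Measurable (X k) :=
  (measurable_history h.step k).mono (history_le h.measurable_switching h.measurable_init k) le_rfl

theorem memLp (h : IsIndepSwitchedSystem μ M ι X) {p} (hX₀ : MemLp (X 0) p μ) (k : ℕ) :
    MemLp (X k) p μ := by
  obtain ⟨C, hC⟩ := exists_norm_mulVec_le M
  induction k with
  | zero => exact hX₀
  | succ k ih =>
    refine ih.of_le_mul (c := C) (h.measurable (k + 1)).aestronglyMeasurable <|
      ae_of_all _ fun ω => ?_
    rw [h.step]
    exact hC _ _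

theorem indepFun [IsZeroOrProbabilityMeasure μ] (h : IsIndepSwitchedSystem μ M ι X) (k : ℕ) :
    IndepFun (ι k) (X k) μ :=
  (IndepFun_iff_Indep _ _ _).2 <| indep_of_indep_of_le_right
    (indep_history h.measurable_switching h.measurable_init h.iIndepFun_switching
      h.indepFun_init k) (measurable_history h.step k).comap_le

theorem integral_quadratic_succ [IsZeroOrProbabilityMeasure μ]
    (h : IsIndepSwitchedSystem μ M ι X) {k : ℕ} (hXk : MemLp (X k) 2 μ) (Q : Matrix m m ℝ) :
    ∫ ω, X (k + 1) ω ⬝ᵥ Q *ᵥ X (k + 1) ω ∂μ =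
      ∫ ω, X k ω ⬝ᵥ (∑ v, μ.real (ι k ⁻¹' {v}) • ((M v)ᵀ * Q * M v)) *ᵥ X k ω ∂μ := by
  have hg : ∀ v, Measurable fun x : m → ℝ => x ⬝ᵥ ((M v)ᵀ * Q * M v) *ᵥ x := fun v => by
    fun_prop
  calc ∫ ω, X (k + 1) ω ⬝ᵥ Q *ᵥ X (k + 1) ω ∂μ
        = ∫ ω, X k ω ⬝ᵥ ((M (ι k ω))ᵀ * Q * M (ι k ω)) *ᵥ X k ω ∂μ := by
        simp only [h.step, dotProduct_transpose_mul_mul_mulVec_self]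
    _ = ∑ v, μ.real (ι k ⁻¹' {v}) * ∫ ω, X k ω ⬝ᵥ ((M v)ᵀ * Q * M v) *ᵥ X k ω ∂μ :=
        (h.indepFun k).integral_comp_eq_sum (h.measurable_switching k) (h.measurable k) hg
          fun v => hXk.integrable_dotProduct_mulVec _
    _ = _ := by
        simp only [dotProduct_sum_smul_mulVec, ← integral_const_mul]
        exact (integral_finsetSum _ fun v _ =>
          (hXk.integrable_dotProduct_mulVec _).const_mul _).symm

open Filter Topology in
theorem tendsto_integral_sum_sq [IsZeroOrProbabilityMeasure μ]
    (h : IsIndepSwitchedSystem μ M ι X) (hX₀ : MemLp (X 0) 2 μ) {w : V → ℝ}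
    (hw : ∀ k v, μ.real (ι k ⁻¹' {v}) = w v) {Q : Matrix m m ℝ}
    (hQ : ∀ x, x ≠ 0 → 0 < x ⬝ᵥ Q *ᵥ x)
    (hQS : ∀ x, x ≠ 0 → x ⬝ᵥ (∑ v, w v • ((M v)ᵀ * Q * M v)) *ᵥ x < x ⬝ᵥ Q *ᵥ x) :
    Tendsto (fun k => ∫ ω, ∑ i, X k ω i ^ 2 ∂μ) atTop (𝓝 0) := by
  obtain ⟨ρ, hρ0, hρ1, hρ⟩ := exists_lt_one_le_mul_of_homogeneous (by fun_prop) (by fun_prop)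
    (dotProduct_mulVec_smul_self _) (dotProduct_mulVec_smul_self Q) hQ hQS
  obtain ⟨C, hC0, hC⟩ := exists_pos_le_mul_of_homogeneous
    (f := fun x : m → ℝ => ∑ i, x i ^ 2) (by fun_prop) (by fun_prop)
    (fun c x => by simp only [Pi.smul_apply, smul_eq_mul, mul_pow, Finset.mul_sum])
    (dotProduct_mulVec_smul_self Q) hQ
  have hL2 := h.memLp hX₀
  set W : ℕ → ℝ := fun k => ∫ ω, X k ω ⬝ᵥ Q *ᵥ X k ω ∂μ
  have hW : ∀ k, W (k + 1) ≤ ρ * W k := fun k => by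
    simp only [W, h.integral_quadratic_succ (hL2 k), hw k, ← integral_const_mul]
    exact integral_mono ((hL2 k).integrable_dotProduct_mulVec _)
      (((hL2 k).integrable_dotProduct_mulVec Q).const_mul ρ) fun ω => hρ _
  have hbound : ∀ k, ∫ ω, ∑ i, X k ω i ^ 2 ∂μ ≤ C * W 0 * ρ ^ k := fun k =>
    calc ∫ ω, ∑ i, X k ω i ^ 2 ∂μ ≤ C * W k := by
          rw [← integral_const_mul]
          exact integral_mono (integrable_finsetSum _ fun i _ => ((hL2 k).eval i).integrable_sq)
            (((hL2 k).integrable_dotProduct_mulVec Q).const_mul C) fun ω => hC _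
      _ ≤ C * (ρ ^ k * W 0) := by gcongr; exact le_geom hρ0 k fun j _ => hW j
      _ = C * W 0 * ρ ^ k := by ring
  refine squeeze_zero (fun k => integral_nonneg fun ω => by positivity) hbound ?_
  simpa using (tendsto_pow_atTop_nhds_zero_of_lt_one hρ0 hρ1).const_mul (C * W 0)

end IsIndepSwitchedSystem

theorem switched_system_mean_square_stable_general {n l : ℕ} {Ω : Type*} [MeasurableSpace Ω]
    (μ : Measure Ω) [IsProbabilityMeasure μ]
    (A₀ : Matrix (Fin n) (Fin n) ℝ) (A : Fin l → Matrix (Fin n) (Fin n) ℝ)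
    (q : ℝ) (hq : q ∈ Set.Icc (0 : ℝ) 1)
    (p : Fin l → ℝ) (hp : ∀ j, 0 ≤ p j)
    -- the random switching indices: value `0` means dropout (matrix `A₀`),
    -- value `j.succ` means delay grid point `j` (matrix `A j`)
    (ι : ℕ → Ω → Fin (l + 1)) (hιmeas : ∀ k, Measurable (ι k))
    (hι0 : ∀ k, μ (ι k ⁻¹' {0}) = ENNReal.ofReal q)
    (hιj : ∀ k, ∀ j : Fin l, μ (ι k ⁻¹' {j.succ}) = ENNReal.ofReal ((1 - q) * p j))
    -- the indices are mutually independent ...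
    (hiid : iIndepFun ι μ)
    -- ... and the whole index sequence is independent of the initial state
    (X : ℕ → Ω → Fin n → ℝ)
    (hX0 : MemLp (X 0) 2 μ) (hX0meas : Measurable (X 0))
    (hindep : IndepFun (fun ω => fun k => ι k ω) (X 0) μ)
    -- the switched dynamics
    (hrec : ∀ k ω, X (k + 1) ω =
      (Fin.cases A₀ A (ι k ω) : Matrix (Fin n) (Fin n) ℝ).mulVec (X k ω))
    (Q : Matrix (Fin n) (Fin n) ℝ)
    (hQpos : ∀ x : Fin n → ℝ, x ≠ 0 → 0 < x ⬝ᵥ Q.mulVec x)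
    (hneg0 : ∀ x : Fin n → ℝ, x ≠ 0 → x ⬝ᵥ (A₀ᵀ * Q * A₀ - Q).mulVec x < 0)
    (hneg1 : ∀ x : Fin n → ℝ, x ≠ 0 →
      x ⬝ᵥ ((∑ j, p j • ((A j)ᵀ * Q * A j)) - Q).mulVec x < 0) :
    Filter.Tendsto (fun k => ∫ ω, ∑ i, (X k ω i) ^ 2 ∂μ) Filter.atTop (nhds 0) := by
  have hsys : IsIndepSwitchedSystem μ (Fin.cases A₀ A) ι X :=
    ⟨hιmeas, hX0meas, hiid, hindep, hrec⟩
  have hq' : 0 ≤ 1 - q := sub_nonneg.2 hq.2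
  have hw : ∀ k v, μ.real (ι k ⁻¹' {v}) = Fin.cases q (fun j => (1 - q) * p j) v := by
    intro k v
    cases v using Fin.cases with
    | zero => simp [measureReal_def, hι0, hq.1]
    | succ j => simp [measureReal_def, hιj, mul_nonneg hq' (hp j)]
  refine hsys.tendsto_integral_sum_sq hX0 hw hQpos fun x hx => ?_
  have h₀ := hneg0 x hx
  have h₁ := hneg1 x hx
  simp only [sub_mulVec, dotProduct_sub, dotProduct_sum_smul_mulVec, sub_neg] at h₀ h₁
  rw [dotProduct_sum_smul_mulVec, Fin.sum_univ_succ]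
  simp only [Fin.cases_zero, Fin.cases_succ, mul_assoc (1 - q), ← Finset.mul_sum]
  exact convex_Iio (𝕜 := ℝ) _ (Set.mem_Iio.2 h₀) (Set.mem_Iio.2 h₁) hq.1 hq' (add_sub_cancel q 1)

/-- Mean-square stability of the random switched linear system: at each step, with
probability `q` the dropout matrix `A₀` acts, and with probability `(1−q)·pⱼ` the matrix
`Aⱼ` acts; the i.i.d. switching indices are independent of the square-integrable initial
state.  If a common symmetric positive-definite `Q` satisfies the two Lyapunov LMIs
`A₀ᵀQA₀ − Q < 0` and `Σⱼ pⱼ·AⱼᵀQAⱼ − Q < 0`, then `E[‖X_k‖²] → 0`. -/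
theorem switched_system_mean_square_stable {n l : ℕ} {Ω : Type*} [MeasurableSpace Ω]
    (μ : Measure Ω) [IsProbabilityMeasure μ]
    (A₀ : Matrix (Fin n) (Fin n) ℝ) (A : Fin l → Matrix (Fin n) (Fin n) ℝ)
    (q : ℝ) (hq : q ∈ Set.Icc (0 : ℝ) 1)
    (p : Fin l → ℝ) (hp : ∀ j, 0 ≤ p j) (hpsum : ∑ j, p j = 1)
    -- the random switching indices: value `0` means dropout (matrix `A₀`),
    -- value `j.succ` means delay grid point `j` (matrix `A j`)
    (ι : ℕ → Ω → Fin (l + 1)) (hιmeas : ∀ k, Measurable (ι k))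
    (hι0 : ∀ k, μ (ι k ⁻¹' {0}) = ENNReal.ofReal q)
    (hιj : ∀ k, ∀ j : Fin l, μ (ι k ⁻¹' {j.succ}) = ENNReal.ofReal ((1 - q) * p j))
    -- the indices are mutually independent ...
    (hiid : iIndepFun ι μ)
    -- ... and the whole index sequence is independent of the initial state
    (X : ℕ → Ω → Fin n → ℝ)
    (hX0 : MemLp (X 0) 2 μ) (hX0meas : Measurable (X 0))
    (hindep : IndepFun (fun ω => fun k => ι k ω) (X 0) μ)
    -- the switched dynamics
    (hrec : ∀ k ω, X (k + 1) ω =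
      (Fin.cases A₀ A (ι k ω) : Matrix (Fin n) (Fin n) ℝ).mulVec (X k ω))
    (Q : Matrix (Fin n) (Fin n) ℝ) (hQsymm : Q.IsSymm)
    (hQpos : ∀ x : Fin n → ℝ, x ≠ 0 → 0 < x ⬝ᵥ Q.mulVec x)
    (hneg0 : ∀ x : Fin n → ℝ, x ≠ 0 → x ⬝ᵥ (A₀ᵀ * Q * A₀ - Q).mulVec x < 0)
    (hneg1 : ∀ x : Fin n → ℝ, x ≠ 0 →
      x ⬝ᵥ ((∑ j, p j • ((A j)ᵀ * Q * A j)) - Q).mulVec x < 0) :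
    Filter.Tendsto (fun k => ∫ ω, ∑ i, (X k ω i) ^ 2 ∂μ) Filter.atTop (nhds 0) :=
  switched_system_mean_square_stable_general μ A₀ A q hq p hp ι hιmeas hι0 hιj hiid X hX0 hX0meas
    hindep hrec Q hQpos hneg0 hneg1
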